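/- In the setting of the previous level-curve lemma, if z = (h(v,y), y) lies on a level curve of t with tangent vector X_z := (h_y(v,y), 1), then h_y(v,y) = −(φ_{yy}(z) − A(z₁)φ_{xy}(z))/(φ_{xy}(z) − A(z₁)φ_{xx}(z)). Consequently, if λ > 0 and |A(z) − A(z₁)| ≤ λ, then |h_y(v,y) + A(z₁)| ≤ 3λ, i.e. |X_z − (−A(z₁), 1)| ≤ 3λ. -/

import Mathlib

open Real Set Matrix

/-- The square `Σ = [-1,1]²`. -/
def Sig : Set (ℝ × ℝ) := Set.Icc ((-1, -1) : ℝ × ℝ) (1, 1)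

/-- The square `2Σ = [-2,2]²`. -/
def Sig2 : Set (ℝ × ℝ) := Set.Icc ((-2, -2) : ℝ × ℝ) (2, 2)

/-- Partial derivative `φ_x`. -/
noncomputable def px (φ : ℝ × ℝ → ℝ) (z : ℝ × ℝ) : ℝ := deriv (fun t => φ (t, z.2)) z.1

/-- Partial derivative `φ_y`. -/
noncomputable def py (φ : ℝ × ℝ → ℝ) (z : ℝ × ℝ) : ℝ := deriv (fun t => φ (z.1, t)) z.2

/-- Second partial derivative `φ_{xx}`. -/
noncomputable def pxx (φ : ℝ × ℝ → ℝ) (z : ℝ × ℝ) : ℝ := deriv (fun t => px φ (t, z.2)) z.1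

/-- Second partial derivative `φ_{xy}`. -/
noncomputable def pxy (φ : ℝ × ℝ → ℝ) (z : ℝ × ℝ) : ℝ := deriv (fun t => px φ (z.1, t)) z.2

/-- Second partial derivative `φ_{yy}`. -/
noncomputable def pyy (φ : ℝ × ℝ → ℝ) (z : ℝ × ℝ) : ℝ := deriv (fun t => py φ (z.1, t)) z.2

/-- `H = φ_{xy}² − φ_{xx} φ_{yy}` (minus the Hessian determinant). -/
noncomputable def HH (φ : ℝ × ℝ → ℝ) (z : ℝ × ℝ) : ℝ := pxy φ z ^ 2 - pxx φ z * pyy φ z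

/-- `A = φ_{yy}/(φ_{xy} + √H)`. -/
noncomputable def AA (φ : ℝ × ℝ → ℝ) (z : ℝ × ℝ) : ℝ :=
  pyy φ z / (pxy φ z + Real.sqrt (HH φ z))

/-- `B = φ_{xx}/(φ_{xy} + √H)`. -/
noncomputable def BB (φ : ℝ × ℝ → ℝ) (z : ℝ × ℝ) : ℝ :=
  pxx φ z / (pxy φ z + Real.sqrt (HH φ z))

/-- `q = 2H/(φ_{xy} + √H)`. -/
noncomputable def qf (φ : ℝ × ℝ → ℝ) (z : ℝ × ℝ) : ℝ :=
  2 * HH φ z / (pxy φ z + Real.sqrt (HH φ z))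

/-- The Hessian matrix `D²φ(z)`. -/
noncomputable def Hess (φ : ℝ × ℝ → ℝ) (z : ℝ × ℝ) : Matrix (Fin 2) (Fin 2) ℝ :=
  !![pxx φ z, pxy φ z; pxy φ z, pyy φ z]

/-- Mixed partial derivative `∂_x^a ∂_y^b φ`. -/
noncomputable def pd (a b : ℕ) (φ : ℝ × ℝ → ℝ) (z : ℝ × ℝ) : ℝ :=
  iteratedDeriv a (fun x => iteratedDeriv b (fun y => φ (x, y)) z.2) z.1

/-- The class `Hyp^M(Σ)`: `φ` is `C^M` on `2Σ = [-2,2]²`, with `φ(0)=0`, `∇φ(0)=0`,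
`D²φ(0) = [[0,1],[1,0]]`, and all partial derivatives of order between `3` and `M`
bounded by `10⁻⁵` on `2Σ`. -/
def Hyp (M : ℕ) (φ : ℝ × ℝ → ℝ) : Prop :=
  ContDiffOn ℝ M φ Sig2 ∧ φ (0, 0) = 0 ∧ px φ (0, 0) = 0 ∧ py φ (0, 0) = 0 ∧
  pxx φ (0, 0) = 0 ∧ pyy φ (0, 0) = 0 ∧ pxy φ (0, 0) = 1 ∧
  ∀ a b : ℕ, 3 ≤ a + b → a + b ≤ M → ∀ z ∈ Sig2, |pd a b φ z| ≤ 1 / 100000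

/-- The function `t_{z₁}(w) = (φ_y(w) − φ_y(z₁)) − A(z₁)(φ_x(w) − φ_x(z₁))`. -/
noncomputable def tfun (φ : ℝ × ℝ → ℝ) (z₁ w : ℝ × ℝ) : ℝ :=
  (py φ w - py φ z₁) - AA φ z₁ * (px φ w - px φ z₁)

/-!
Differentiating `t(h(v, s), s) = v` at `s = y` gives
`(φ_xy h_y + φ_yy) − A(z₁) (φ_xx h_y + φ_xy) = 0`, which is the formula for `h_y`. On `Σ` the
third-order bounds of `Hyp³` keep `D²φ` within `2·10⁻⁵` of `[[0,1],[1,0]]` (mean value theorem in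
each variable, after commuting partial derivatives), so the denominator is close to `1`. Since
`A(z)` is a root of `φ_xx A² − 2 φ_xy A + φ_yy`, the numerator of `h_y + A(z₁)` factors as
`(A(z₁) − A(z)) (2 φ_xy − φ_xx (A(z₁) + A(z)))`, and the second factor is close to `2`.
-/

open Filter Topology

section Partials

variable {g : ℝ × ℝ → ℝ} {s : Set (ℝ × ℝ)} {z : ℝ × ℝ}

lemma pxx_eq_px_px (g : ℝ × ℝ → ℝ) : pxx g = px (px g) := rfl

lemma pxy_eq_py_px (g : ℝ × ℝ → ℝ) : pxy g = py (px g) := rfl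

lemma pyy_eq_py_py (g : ℝ × ℝ → ℝ) : pyy g = py (py g) := rfl

lemma HasFDerivAt.px_eq {L : ℝ × ℝ →L[ℝ] ℝ} (hg : HasFDerivAt g L z) : px g z = L (1, 0) := by
  obtain ⟨x, y⟩ := z
  have hslice : HasDerivAt (fun t : ℝ => (t, y)) ((1, 0) : ℝ × ℝ) x :=
    (hasDerivAt_id x).prodMk (hasDerivAt_const x y)
  exact (hg.comp_hasDerivAt x hslice).deriv

lemma HasFDerivAt.py_eq {L : ℝ × ℝ →L[ℝ] ℝ} (hg : HasFDerivAt g L z) : py g z = L (0, 1) := by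
  obtain ⟨x, y⟩ := z
  have hslice : HasDerivAt (fun t : ℝ => (x, t)) ((0, 1) : ℝ × ℝ) y :=
    (hasDerivAt_const y x).prodMk (hasDerivAt_id y)
  exact (hg.comp_hasDerivAt y hslice).deriv

lemma Filter.EventuallyEq.px_eq {g' : ℝ × ℝ → ℝ} (h : g =ᶠ[𝓝 z] g') : px g z = px g' z :=
  EventuallyEq.deriv_eq <|
    ((continuous_id.prodMk continuous_const).tendsto z.1).eventually h

lemma Filter.EventuallyEq.py_eq {g' : ℝ × ℝ → ℝ} (h : g =ᶠ[𝓝 z] g') : py g z = py g' z :=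
  EventuallyEq.deriv_eq <|
    ((continuous_const.prodMk continuous_id).tendsto z.2).eventually h

lemma ContDiffOn.px {n : ℕ} (hg : ContDiffOn ℝ (n + 1) g s) (hs : IsOpen s) :
    ContDiffOn ℝ n (px g) s := by
  refine ((hg.fderiv_of_isOpen hs le_rfl).clm_apply
    (contDiffOn_const (c := ((1, 0) : ℝ × ℝ)))).congr fun w hw => ?_
  exact (((hg.differentiableOn (by simp)).differentiableAt (hs.mem_nhds hw)).hasFDerivAt).px_eq

lemma ContDiffOn.py {n : ℕ} (hg : ContDiffOn ℝ (n + 1) g s) (hs : IsOpen s) :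
    ContDiffOn ℝ n (py g) s := by
  refine ((hg.fderiv_of_isOpen hs le_rfl).clm_apply
    (contDiffOn_const (c := ((0, 1) : ℝ × ℝ)))).congr fun w hw => ?_
  exact (((hg.differentiableOn (by simp)).differentiableAt (hs.mem_nhds hw)).hasFDerivAt).py_eq

lemma px_py_comm (hg : ContDiffOn ℝ 2 g s) (hs : IsOpen s) (hz : z ∈ s) :
    px (py g) z = py (px g) z := by
  have hD : ∀ w ∈ s, HasFDerivAt g (fderiv ℝ g w) w := fun w hw =>
    ((hg.differentiableOn (by simp)).differentiableAt (hs.mem_nhds hw)).hasFDerivAt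
  have hD2 : HasFDerivAt (fderiv ℝ g) (fderiv ℝ (fderiv ℝ g) z) z :=
    (((hg.fderiv_of_isOpen hs (m := 1) (by norm_num)).differentiableOn one_ne_zero).differentiableAt
      (hs.mem_nhds hz)).hasFDerivAt
  have hpy : py g =ᶠ[𝓝 z] fun w => fderiv ℝ g w (0, 1) :=
    eventually_of_mem (hs.mem_nhds hz) fun w hw => (hD w hw).py_eq
  have hpx : px g =ᶠ[𝓝 z] fun w => fderiv ℝ g w (1, 0) :=
    eventually_of_mem (hs.mem_nhds hz) fun w hw => (hD w hw).px_eq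
  rw [hpy.px_eq, hpx.py_eq, (hD2.clm_apply (hasFDerivAt_const _ z)).px_eq,
    (hD2.clm_apply (hasFDerivAt_const _ z)).py_eq]
  simpa using (hg.contDiffAt (hs.mem_nhds hz)).isSymmSndFDerivAt (by simp) (1, 0) (0, 1)

lemma py_px_eventuallyEq (hg : ContDiffOn ℝ 2 g s) (hs : IsOpen s) (hz : z ∈ s) :
    py (px g) =ᶠ[𝓝 z] px (py g) :=
  eventually_of_mem (hs.mem_nhds hz) fun _ hw => (px_py_comm hg hs hw).symm

lemma iterate_px_apply (g : ℝ × ℝ → ℝ) (a : ℕ) (x y : ℝ) :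
    px^[a] g (x, y) = iteratedDeriv a (fun t => g (t, y)) x := by
  induction a generalizing x with
  | zero => simp
  | succ a ih =>
    rw [Function.iterate_succ_apply', iteratedDeriv_succ]
    exact congrArg (deriv · x) (funext ih)

lemma iterate_py_apply (g : ℝ × ℝ → ℝ) (b : ℕ) (x y : ℝ) :
    py^[b] g (x, y) = iteratedDeriv b (fun t => g (x, t)) y := by
  induction b generalizing y with
  | zero => simp
  | succ b ih =>
    rw [Function.iterate_succ_apply', iteratedDeriv_succ]
    exact congrArg (deriv · y) (funext ih)

lemma pd_eq_iterate (a b : ℕ) (g : ℝ × ℝ → ℝ) : pd a b g = px^[a] (py^[b] g) := by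
  ext ⟨x, y⟩
  simp only [pd, iterate_px_apply, iterate_py_apply]

lemma px_pxx (g : ℝ × ℝ → ℝ) : px (pxx g) = pd 3 0 g := by
  rw [pd_eq_iterate]; rfl

lemma px_pyy (g : ℝ × ℝ → ℝ) : px (pyy g) = pd 1 2 g := by
  rw [pd_eq_iterate]; rfl

lemma py_pyy (g : ℝ × ℝ → ℝ) : py (pyy g) = pd 0 3 g := by
  rw [pd_eq_iterate]; rfl

section ThirdOrder

variable (hg : ContDiffOn ℝ 3 g s) (hs : IsOpen s) (hz : z ∈ s)
include hg hs hz

lemma px_pxy : px (pxy g) z = pd 2 1 g z := by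
  rw [pd_eq_iterate]
  exact (py_px_eventuallyEq (hg.of_le (by norm_num)) hs hz).px_eq

lemma py_pxx : py (pxx g) z = pd 2 1 g z := by
  rw [← px_pxy hg hs hz]
  exact (px_py_comm (hg.px hs) hs hz).symm

lemma py_pxy : py (pxy g) z = pd 1 2 g z := by
  rw [pd_eq_iterate]
  exact (py_px_eventuallyEq (hg.of_le (by norm_num)) hs hz).py_eq.trans
    (px_py_comm (hg.py hs) hs hz).symm

end ThirdOrder

end Partials

section Graph

variable {g : ℝ × ℝ → ℝ} {k : ℝ → ℝ} {k' y : ℝ}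

lemma DifferentiableAt.hasDerivAt_along_graph (hg : DifferentiableAt ℝ g (k y, y))
    (hk : HasDerivAt k k' y) :
    HasDerivAt (fun t => g (k t, t)) (px g (k y, y) * k' + py g (k y, y)) y := by
  rw [hg.hasFDerivAt.px_eq, hg.hasFDerivAt.py_eq]
  refine (hg.hasFDerivAt.comp_hasDerivAt_of_eq y (hk.prodMk (hasDerivAt_id' y)) rfl).congr_deriv ?_
  have hdir : ((k', 1) : ℝ × ℝ) = k' • ((1, 0) : ℝ × ℝ) + (0, 1) := by simp
  rw [hdir, map_add, map_smul, smul_eq_mul, mul_comm]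

lemma hasDerivAt_tfun_along_graph {φ : ℝ × ℝ → ℝ} {s : Set (ℝ × ℝ)} (hφ : ContDiffOn ℝ 2 φ s)
    (hs : IsOpen s) (hz : (k y, y) ∈ s) (hk : HasDerivAt k k' y) (z₁ : ℝ × ℝ) :
    HasDerivAt (fun t => tfun φ z₁ (k t, t))
      ((pxy φ (k y, y) * k' + pyy φ (k y, y))
        - AA φ z₁ * (pxx φ (k y, y) * k' + pxy φ (k y, y))) y := by
  have hdiff {f : ℝ × ℝ → ℝ} (hf : ContDiffOn ℝ 1 f s) : DifferentiableAt ℝ f (k y, y) :=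
    (hf.differentiableOn one_ne_zero).differentiableAt (hs.mem_nhds hz)
  have hpy := (hdiff (hφ.py hs)).hasDerivAt_along_graph hk
  have hpx := (hdiff (hφ.px hs)).hasDerivAt_along_graph hk
  rw [px_py_comm hφ hs hz] at hpy
  exact (hpy.sub_const _).sub ((hpx.sub_const _).const_mul _)

end Graph

lemma Sig_eq : Sig = Icc (-1) 1 ×ˢ Icc (-1) 1 := (Icc_prod_Icc _ _ _ _).symm

lemma interior_Sig2 : interior Sig2 = Ioo (-2) 2 ×ˢ Ioo (-2) 2 := by
  rw [Sig2, ← Icc_prod_Icc, interior_prod_eq, interior_Icc]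

lemma Sig_subset_interior_Sig2 : Sig ⊆ interior Sig2 := by
  rw [Sig_eq, interior_Sig2]
  exact prod_mono (Icc_subset_Ioo (by norm_num) (by norm_num))
    (Icc_subset_Ioo (by norm_num) (by norm_num))

lemma abs_sub_le_of_abs_deriv_le {f : ℝ → ℝ} {c t : ℝ}
    (hf : ∀ u ∈ Icc (-1 : ℝ) 1, DifferentiableAt ℝ f u)
    (hb : ∀ u ∈ Icc (-1 : ℝ) 1, |deriv f u| ≤ c) (ht : t ∈ Icc (-1 : ℝ) 1) :
    |f t - f 0| ≤ c := by
  have hzero : (0 : ℝ) ∈ Icc (-1 : ℝ) 1 := by norm_num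
  have hmvt := (convex_Icc (-1 : ℝ) 1).norm_image_sub_le_of_norm_deriv_le hf
    (fun u hu => (Real.norm_eq_abs _).trans_le (hb u hu)) hzero ht
  calc |f t - f 0| ≤ c * |t| := by simpa using hmvt
    _ ≤ c * 1 := by
      gcongr
      · exact (abs_nonneg _).trans (hb 0 hzero)
      · exact abs_le.2 ht
    _ = c := mul_one c

lemma abs_sub_le_of_abs_px_py_le {g : ℝ × ℝ → ℝ} {c : ℝ}
    (hg : ∀ z ∈ Sig, DifferentiableAt ℝ g z) (hx : ∀ z ∈ Sig, |px g z| ≤ c)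
    (hy : ∀ z ∈ Sig, |py g z| ≤ c) {z : ℝ × ℝ} (hz : z ∈ Sig) :
    |g z - g (0, 0)| ≤ 2 * c := by
  obtain ⟨x, y⟩ := z
  rw [Sig_eq] at hg hx hy hz
  obtain ⟨hx₀, hy₀⟩ := hz
  have hvert : |g (x, y) - g (x, 0)| ≤ c :=
    abs_sub_le_of_abs_deriv_le (f := fun t => g (x, t))
      (fun t ht => (hg (x, t) ⟨hx₀, ht⟩).comp t
        ((differentiableAt_const x).prodMk differentiableAt_id))
      (fun t ht => hy (x, t) ⟨hx₀, ht⟩) hy₀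
  have hhor : |g (x, 0) - g (0, 0)| ≤ c :=
    abs_sub_le_of_abs_deriv_le (f := fun t => g (t, 0))
      (fun t ht => (hg (t, 0) ⟨ht, by norm_num⟩).comp t
        (differentiableAt_id.prodMk (differentiableAt_const 0)))
      (fun t ht => hx (t, 0) ⟨ht, by norm_num⟩) hx₀
  calc |g (x, y) - g (0, 0)| ≤ |g (x, y) - g (x, 0)| + |g (x, 0) - g (0, 0)| :=
        abs_sub_le _ _ _
    _ ≤ 2 * c := by linarith

lemma AA_quadratic_of_nonneg {φ : ℝ × ℝ → ℝ} {z : ℝ × ℝ} (hH : 0 ≤ HH φ z) (hQ : 0 < pxy φ z) :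
    pxx φ z * AA φ z ^ 2 - 2 * pxy φ z * AA φ z + pyy φ z = 0 := by
  have hs2 : √(HH φ z) ^ 2 = pxy φ z ^ 2 - pxx φ z * pyy φ z := Real.sq_sqrt hH
  have hden : pxy φ z + √(HH φ z) ≠ 0 := by positivity
  have hA : AA φ z * (pxy φ z + √(HH φ z)) = pyy φ z := div_mul_cancel₀ _ hden
  -- Rationalising: `A = (φ_xy − √H) / φ_xx`, written without dividing by `φ_xx`.
  have hPA : pxx φ z * AA φ z = pxy φ z - √(HH φ z) := by
    refine mul_right_cancel₀ hden ?_
    linear_combination pxx φ z * hA + hs2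
  linear_combination AA φ z * hPA - hA

namespace Hyp

variable {φ : ℝ × ℝ → ℝ} (hφ : Hyp 3 φ) {z : ℝ × ℝ}
include hφ

lemma contDiffOn_interior : ContDiffOn ℝ 3 φ (interior Sig2) :=
  hφ.1.mono interior_subset

lemma abs_pd_le {a b : ℕ} (hab : a + b = 3) (hz : z ∈ Sig) : |pd a b φ z| ≤ 1 / 100000 :=
  hφ.2.2.2.2.2.2.2 a b hab.ge hab.le z (interior_subset (Sig_subset_interior_Sig2 hz))

lemma abs_sub_origin_le {g : ℝ × ℝ → ℝ} (hg : ContDiffOn ℝ 1 g (interior Sig2))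
    {a b a' b' : ℕ} (hab : a + b = 3) (hab' : a' + b' = 3)
    (hx : ∀ w ∈ Sig, px g w = pd a b φ w) (hy : ∀ w ∈ Sig, py g w = pd a' b' φ w)
    (hz : z ∈ Sig) : |g z - g (0, 0)| ≤ 2 / 100000 := by
  have h := abs_sub_le_of_abs_px_py_le
    (fun w hw => (hg.differentiableOn one_ne_zero).differentiableAt
      (isOpen_interior.mem_nhds (Sig_subset_interior_Sig2 hw)))
    (fun w hw => (hx w hw).symm ▸ hφ.abs_pd_le hab hw)
    (fun w hw => (hy w hw).symm ▸ hφ.abs_pd_le hab' hw) hz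
  linarith

lemma abs_pxx_le (hz : z ∈ Sig) : |pxx φ z| ≤ 2 / 100000 := by
  have hC := hφ.contDiffOn_interior
  have h := hφ.abs_sub_origin_le ((hC.px isOpen_interior).px isOpen_interior)
    (a := 3) (b := 0) (a' := 2) (b' := 1) rfl rfl (fun w _ => congrFun (px_pxx φ) w)
    (fun w hw => py_pxx hC isOpen_interior (Sig_subset_interior_Sig2 hw)) hz
  rwa [← pxx_eq_px_px, hφ.2.2.2.2.1, sub_zero] at h

lemma abs_pxy_sub_one_le (hz : z ∈ Sig) : |pxy φ z - 1| ≤ 2 / 100000 := by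
  have hC := hφ.contDiffOn_interior
  have h := hφ.abs_sub_origin_le ((hC.px isOpen_interior).py isOpen_interior)
    (a := 2) (b := 1) (a' := 1) (b' := 2) rfl rfl
    (fun w hw => px_pxy hC isOpen_interior (Sig_subset_interior_Sig2 hw))
    (fun w hw => py_pxy hC isOpen_interior (Sig_subset_interior_Sig2 hw)) hz
  rwa [← pxy_eq_py_px, hφ.2.2.2.2.2.2.1] at h

lemma abs_pyy_le (hz : z ∈ Sig) : |pyy φ z| ≤ 2 / 100000 := by
  have hC := hφ.contDiffOn_interior
  have h := hφ.abs_sub_origin_le ((hC.py isOpen_interior).py isOpen_interior)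
    (a := 1) (b := 2) (a' := 0) (b' := 3) rfl rfl (fun w _ => congrFun (px_pyy φ) w)
    (fun w _ => congrFun (py_pyy φ) w) hz
  rwa [← pyy_eq_py_py, hφ.2.2.2.2.2.1, sub_zero] at h

lemma HH_nonneg (hz : z ∈ Sig) : 0 ≤ HH φ z := by
  have hP := abs_le.1 (hφ.abs_pxx_le hz)
  have hQ := abs_le.1 (hφ.abs_pxy_sub_one_le hz)
  have hR := abs_le.1 (hφ.abs_pyy_le hz)
  unfold HH
  nlinarith

lemma pxy_pos (hz : z ∈ Sig) : 0 < pxy φ z := by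
  linarith [abs_le.1 (hφ.abs_pxy_sub_one_le hz)]

lemma AA_quadratic (hz : z ∈ Sig) :
    pxx φ z * AA φ z ^ 2 - 2 * pxy φ z * AA φ z + pyy φ z = 0 :=
  AA_quadratic_of_nonneg (hφ.HH_nonneg hz) (hφ.pxy_pos hz)

lemma abs_AA_le (hz : z ∈ Sig) : |AA φ z| ≤ 1 / 10000 := by
  have hQ := abs_le.1 (hφ.abs_pxy_sub_one_le hz)
  have hden : 1 / 2 ≤ pxy φ z + √(HH φ z) := by linarith [Real.sqrt_nonneg (HH φ z)]
  rw [AA, abs_div, abs_of_pos (a := pxy φ z + √(HH φ z)) (by linarith), div_le_iff₀ (by linarith)]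
  linarith [hφ.abs_pyy_le hz]

end Hyp

section TangentAlgebra

variable {P Q A₁ : ℝ}

lemma le_sub_mul_of_abs_le (hP : |P| ≤ 2 / 100000) (hQ : |Q - 1| ≤ 2 / 100000)
    (hA₁ : |A₁| ≤ 1 / 10000) : 9 / 10 ≤ Q - A₁ * P := by
  have hA₁P : |A₁ * P| ≤ 1 / 10000 * (2 / 100000) := by
    rw [abs_mul]; exact mul_le_mul hA₁ hP (abs_nonneg _) (by norm_num)
  linarith [abs_le.1 hQ, abs_le.1 hA₁P]

lemma abs_add_le_of_tangent_eq {R A k lam : ℝ} (hP : |P| ≤ 2 / 100000)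
    (hQ : |Q - 1| ≤ 2 / 100000) (hA : |A| ≤ 1 / 10000) (hA₁ : |A₁| ≤ 1 / 10000)
    (hquad : P * A ^ 2 - 2 * Q * A + R = 0) (hk : (Q * k + R) - A₁ * (P * k + Q) = 0)
    (hlam : |A - A₁| ≤ lam) : |k + A₁| ≤ 3 * lam := by
  have hD := le_sub_mul_of_abs_le hP hQ hA₁
  have hfactor : (k + A₁) * (Q - A₁ * P) = (A₁ - A) * (2 * Q - P * (A₁ + A)) := by
    linear_combination hk - hquad
  have hPA : |P * (A₁ + A)| ≤ 2 / 100000 * (2 / 10000) := by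
    rw [abs_mul]
    exact mul_le_mul hP ((abs_add_le _ _).trans (by linarith)) (abs_nonneg _) (by norm_num)
  have hsecond : |2 * Q - P * (A₁ + A)| ≤ 22 / 10 := by
    rw [abs_le]; constructor <;> linarith [abs_le.1 hQ, abs_le.1 hPA]
  have hlam₀ : 0 ≤ lam := (abs_nonneg _).trans hlam
  have hmain : |k + A₁| * (9 / 10) ≤ lam * (22 / 10) :=
    calc |k + A₁| * (9 / 10) ≤ |k + A₁| * (Q - A₁ * P) := by gcongr
      _ = |A₁ - A| * |2 * Q - P * (A₁ + A)| := by
        rw [← abs_of_pos (a := Q - A₁ * P) (by linarith), ← abs_mul, hfactor, abs_mul]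
      _ ≤ lam * (22 / 10) := by
        gcongr
        rwa [abs_sub_comm]
  linarith

end TangentAlgebra

/-- Direction of level curves: if `h` parametrizes the level curves of `t_{z₁}`, then
`h_y = −(φ_{yy} − A(z₁)φ_{xy})/(φ_{xy} − A(z₁)φ_{xx})` at `z = (h(v,y), y)`, and if
`|A(z) − A(z₁)| ≤ λ` (with `0 < λ ≤ 1`) then `|h_y + A(z₁)| ≤ 3λ`, i.e. the tangent
vector `X_z = (h_y, 1)` satisfies `|X_z − (−A(z₁),1)| ≤ 3λ`. -/
theorem level_curve_direction
    (φ : ℝ × ℝ → ℝ) (hφ : Hyp 3 φ) (z₁ : ℝ × ℝ) (hz₁ : z₁ ∈ Sig)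
    (h : ℝ × ℝ → ℝ) (v y : ℝ) (hy : y ∈ Set.Ioo (-1 : ℝ) 1)
    (hlevel : ∀ s ∈ Set.Icc (-1 : ℝ) 1, tfun φ z₁ (h (v, s), s) = v)
    (hdiff : DifferentiableAt ℝ (fun s => h (v, s)) y)
    (hz : (h (v, y), y) ∈ Sig) :
    deriv (fun s => h (v, s)) y
        = -((pyy φ (h (v, y), y) - AA φ z₁ * pxy φ (h (v, y), y)) /
            (pxy φ (h (v, y), y) - AA φ z₁ * pxx φ (h (v, y), y))) ∧
    ∀ lam : ℝ, 0 < lam → lam ≤ 1 →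
      |AA φ (h (v, y), y) - AA φ z₁| ≤ lam →
      |deriv (fun s => h (v, s)) y + AA φ z₁| ≤ 3 * lam := by
  have hconst : HasDerivAt (fun s => tfun φ z₁ (h (v, s), s)) 0 y :=
    (hasDerivAt_const y v).congr_of_eventuallyEq
      (eventually_of_mem (Icc_mem_nhds hy.1 hy.2) hlevel)
  have hk := (hasDerivAt_tfun_along_graph (hφ.contDiffOn_interior.of_le (by norm_num))
    isOpen_interior (Sig_subset_interior_Sig2 hz) hdiff.hasDerivAt z₁).unique hconst
  have hP := hφ.abs_pxx_le hz
  have hQ := hφ.abs_pxy_sub_one_le hz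
  have hA₁ := hφ.abs_AA_le hz₁
  refine ⟨?_, fun lam _ _ hlam =>
    abs_add_le_of_tangent_eq hP hQ (hφ.abs_AA_le hz) hA₁ (hφ.AA_quadratic hz) hk hlam⟩
  have hD := le_sub_mul_of_abs_le hP hQ hA₁
  field_simp
  linear_combination hk
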